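/- (Interval property.) Let x : ℤ → ℤ be any integer-valued sequence and let i ∈ ℤ satisfy R_x(i) > i. Then every integer j with i ≤ j < R_x(i) is a descendant of R_x(i), i.e. there exists m ≥ 1 with R_x^m(j) = R_x(i). -/

import Mathlib

/-!
On `[i, R i)` the partial sums `∑_{l=i}^{j-1} x l` are negative by minimality of `R i`, while the
full sum over `[i, R i)` is nonnegative, so every tail sum over `[j, R i)` is nonnegative. Hence
`R` maps each point of `[i, R i)` strictly forward but not beyond `R i`, and iterating it from `j`
must land exactly on `R i`.
-/

attribute [local instance] Classical.propDecidable

/-- The record map of an integer sequence: `n` is sent to the least integer `j > n`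
with `∑_{l=n}^{j-1} x l ≥ 0` if such `j` exists, and to `n` otherwise. -/
noncomputable def recordMap (x : ℤ → ℤ) (n : ℤ) : ℤ :=
  if ∃ j : ℤ, n < j ∧ 0 ≤ ∑ l ∈ Finset.Ico n j, x l then
    sInf {j : ℤ | n < j ∧ 0 ≤ ∑ l ∈ Finset.Ico n j, x l}
  else n

theorem Finset.sum_Ico_add_sum_Ico {α M : Type*} [LinearOrder α] [LocallyFiniteOrder α]
    [AddCommMonoid M] (f : α → M) {a b c : α} (hab : a ≤ b) (hbc : b ≤ c) :
    ∑ l ∈ Finset.Ico a b, f l + ∑ l ∈ Finset.Ico b c, f l = ∑ l ∈ Finset.Ico a c, f l := by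
  rw [← Finset.Ico_union_Ico_eq_Ico hab hbc]
  convert (Finset.sum_union (Finset.Ico_disjoint_Ico_consecutive a b c)).symm

theorem exists_iterate_eq_of_forall_mem_Ioc {f : ℤ → ℤ} {i r : ℤ}
    (hf : ∀ k ∈ Set.Ico i r, f k ∈ Set.Ioc k r) (j : ℤ) (hij : i ≤ j) (hjr : j < r) :
    ∃ m : ℕ, 1 ≤ m ∧ f^[m] j = r := by
  obtain ⟨hlt, hle⟩ := hf j ⟨hij, hjr⟩
  rcases hle.eq_or_lt with heq | hlt'
  · exact ⟨1, le_rfl, heq⟩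
  · obtain ⟨m, -, hm⟩ := exists_iterate_eq_of_forall_mem_Ioc hf (f j) (hij.trans hlt.le) hlt'
    exact ⟨m + 1, by omega, by rw [Function.iterate_succ_apply, hm]⟩
termination_by (r - j).toNat
decreasing_by omega

namespace recordMap

variable {x : ℤ → ℤ} {n k : ℤ}

private abbrev candidates (x : ℤ → ℤ) (n : ℤ) : Set ℤ :=
  {j : ℤ | n < j ∧ 0 ≤ ∑ l ∈ Finset.Ico n j, x l}

private theorem bddBelow (x : ℤ → ℤ) (n : ℤ) : BddBelow (candidates x n) :=
  ⟨n, fun _ hj => hj.1.le⟩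

private theorem eq_sInf_of_sum_nonneg (hk : n < k) (hsum : 0 ≤ ∑ l ∈ Finset.Ico n k, x l) :
    recordMap x n = sInf (candidates x n) :=
  if_pos ⟨k, hk, hsum⟩

theorem le_of_sum_nonneg (hk : n < k) (hsum : 0 ≤ ∑ l ∈ Finset.Ico n k, x l) :
    recordMap x n ≤ k := by
  rw [eq_sInf_of_sum_nonneg hk hsum]
  exact csInf_le (bddBelow x n) ⟨hk, hsum⟩

theorem lt_and_sum_nonneg_of_sum_nonneg (hk : n < k) (hsum : 0 ≤ ∑ l ∈ Finset.Ico n k, x l) :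
    n < recordMap x n ∧ 0 ≤ ∑ l ∈ Finset.Ico n (recordMap x n), x l := by
  rw [eq_sInf_of_sum_nonneg hk hsum]
  exact Int.csInf_mem (s := candidates x n) ⟨k, hk, hsum⟩ (bddBelow x n)

theorem sum_nonneg (h : n < recordMap x n) : 0 ≤ ∑ l ∈ Finset.Ico n (recordMap x n), x l := by
  by_cases hex : ∃ j : ℤ, n < j ∧ 0 ≤ ∑ l ∈ Finset.Ico n j, x l
  · obtain ⟨j, hj, hsum⟩ := hex
    exact (lt_and_sum_nonneg_of_sum_nonneg hj hsum).2
  · rw [recordMap, if_neg hex] at h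
    exact absurd h (lt_irrefl n)

theorem sum_neg_of_lt (hnk : n < k) (hk : k < recordMap x n) :
    ∑ l ∈ Finset.Ico n k, x l < 0 := by
  by_contra! hsum
  exact (le_of_sum_nonneg hnk hsum).not_gt hk

theorem sum_tail_nonneg {i j : ℤ} (hij : i ≤ j) (hj : j < recordMap x i) :
    0 ≤ ∑ l ∈ Finset.Ico j (recordMap x i), x l := by
  rcases hij.eq_or_lt with rfl | hij
  · exact sum_nonneg hj
  · have hsplit := Finset.sum_Ico_add_sum_Ico x hij.le hj.le
    have := sum_nonneg (hij.trans hj)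
    have := sum_neg_of_lt hij hj
    omega

theorem mem_Ioc_of_mem_Ico {i j : ℤ} (hj : j ∈ Set.Ico i (recordMap x i)) :
    recordMap x j ∈ Set.Ioc j (recordMap x i) := by
  obtain ⟨hij, hj⟩ := hj
  have hsum := sum_tail_nonneg hij hj
  exact ⟨(lt_and_sum_nonneg_of_sum_nonneg hj hsum).1, le_of_sum_nonneg hj hsum⟩

end recordMap

theorem interval_property_general (x : ℤ → ℤ) (i : ℤ)
    (j : ℤ) (hij : i ≤ j) (hj : j < recordMap x i) :
    ∃ m : ℕ, 1 ≤ m ∧ (recordMap x)^[m] j = recordMap x i :=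
  exists_iterate_eq_of_forall_mem_Ioc (fun _ => recordMap.mem_Ioc_of_mem_Ico) j hij hj

/-- Interval property: if `R_x(i) > i`, then every integer `j` with `i ≤ j < R_x(i)`
is a descendant of `R_x(i)`. -/
theorem interval_property (x : ℤ → ℤ) (i : ℤ) (hi : i < recordMap x i)
    (j : ℤ) (hij : i ≤ j) (hj : j < recordMap x i) :
    ∃ m : ℕ, 1 ≤ m ∧ (recordMap x)^[m] j = recordMap x i :=
  interval_property_general x i j hij hj
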